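/- arXiv:0905.1508 — 8 statements merged into one kernel-verified Lean document; each statement's English description precedes it below -/
import Mathlib

section
/- Let b be a positive semidefinite symmetric bilinear form on a real inner product space whose eigenvalues are λ-pinched with 0 < λ ≤ 1 (i.e., b(X,X) ≥ λ·b(Y,Y) for all unit vectors X,Y). Then for any orthogonal vectors Y, W one has (2λ/(1+λ))·(b(Y,Y)+b(W,W)) ≤ b(Y+W, Y+W) ≤ (2/(1+λ))·(b(Y,Y)+b(W,W)). -/
open scoped RealInnerProductSpace

/-- Lemma 2.3 of Ni–Wilking (inequality part): if `b` is a positive semidefinite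
symmetric bilinear form whose eigenvalues are `λ`-pinched (`0 < λ ≤ 1`), then for
orthogonal vectors `Y, W`,
`(2λ/(1+λ))·(b(Y,Y)+b(W,W)) ≤ b(Y+W,Y+W) ≤ (2/(1+λ))·(b(Y,Y)+b(W,W))`. -/
theorem stmt_2 {V : Type*} [NormedAddCommGroup V] [InnerProductSpace ℝ V]
    [FiniteDimensional ℝ V]
    (b : V →ₗ[ℝ] V →ₗ[ℝ] ℝ)
    (hsymm : ∀ X Y : V, b X Y = b Y X)
    (hpsd : ∀ X : V, 0 ≤ b X X)
    (lam : ℝ) (hlam0 : 0 < lam) (hlam1 : lam ≤ 1)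
    (hpinch : ∀ X Y : V, ‖X‖ = ‖Y‖ → lam * b Y Y ≤ b X X)
    (Y W : V) (hYW : ⟪Y, W⟫ = 0) :
    2 * lam / (1 + lam) * (b Y Y + b W W) ≤ b (Y + W) (Y + W) ∧
      b (Y + W) (Y + W) ≤ 2 / (1 + lam) * (b Y Y + b W W) := by
  have hsq : ‖Y + W‖ ^ 2 = ‖Y - W‖ ^ 2 := by
    rw [norm_add_sq_real, norm_sub_sq_real, hYW]; ring
  have hnorm : ‖Y + W‖ = ‖Y - W‖ := by
    nlinarith [norm_nonneg (Y + W), norm_nonneg (Y - W)]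
  have h1 := hpinch (Y + W) (Y - W) hnorm
  have h2 := hpinch (Y - W) (Y + W) hnorm.symm
  have hpar : b (Y + W) (Y + W) + b (Y - W) (Y - W) = 2 * (b Y Y + b W W) := by
    simp only [map_add, map_sub, LinearMap.add_apply, LinearMap.sub_apply]
    have := hsymm Y W
    linarith
  have hpos : 0 < 1 + lam := by linarith
  constructor
  · rw [div_mul_eq_mul_div, div_le_iff₀ hpos]
    nlinarith
  · rw [div_mul_eq_mul_div, le_div_iff₀ hpos]
    nlinarith
end

section
/- Let R be an algebraic curvature operator on ℝⁿ (n ≥ 4) with nonnegative sectional curvature and λ-pinched flag curvature (0 < λ ≤ 1). Then for any four mutually orthogonal vectors X, Y, Z, W: 6·((1+λ)/(1−λ))·|R(X,Y,Z,W)| ≤ k(Y,Z) + k(X,Z) + k(X,W) + k(Y,W) + 2·k(X,Y) + 2·k(Z,W), where k(A,B) = R(A,B,A,B). -/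
open scoped RealInnerProductSpace

set_option maxHeartbeats 1000000

/-- Corollary 2.4 of Ni–Wilking (generalized Berger lemma): if an algebraic
curvature tensor on `ℝⁿ` (`n ≥ 4`) has nonnegative sectional curvature and
`λ`-pinched flag curvature (`0 < λ < 1`), then for mutually orthogonal
`X, Y, Z, W`,
`6·((1+λ)/(1−λ))·|R(X,Y,Z,W)| ≤ k(Y,Z)+k(X,Z)+k(X,W)+k(Y,W)+2k(X,Y)+2k(Z,W)`. -/
theorem stmt_5 (n : ℕ) (hn : 4 ≤ n)
    (R : EuclideanSpace ℝ (Fin n) →ₗ[ℝ] EuclideanSpace ℝ (Fin n) →ₗ[ℝ]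
      EuclideanSpace ℝ (Fin n) →ₗ[ℝ] EuclideanSpace ℝ (Fin n) →ₗ[ℝ] ℝ)
    (hanti : ∀ X Y Z W, R X Y Z W = - R Y X Z W)
    (hpair : ∀ X Y Z W, R X Y Z W = R Z W X Y)
    (hbianchi : ∀ X Y Z W, R X Y Z W + R Y Z X W + R Z X Y W = 0)
    (hsec : ∀ X Y, 0 ≤ R X Y X Y)
    (lam : ℝ) (hlam0 : 0 < lam) (hlam1 : lam < 1)
    (hflag : ∀ e X Y : EuclideanSpace ℝ (Fin n), e ≠ 0 → ⟪e, X⟫ = 0 → ⟪e, Y⟫ = 0 →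
      ‖X‖ = ‖Y‖ → lam * R e Y e Y ≤ R e X e X)
    (X Y Z W : EuclideanSpace ℝ (Fin n))
    (hXY : ⟪X, Y⟫ = 0) (hXZ : ⟪X, Z⟫ = 0) (hXW : ⟪X, W⟫ = 0)
    (hYZ : ⟪Y, Z⟫ = 0) (hYW : ⟪Y, W⟫ = 0) (hZW : ⟪Z, W⟫ = 0) :
    6 * ((1 + lam) / (1 - lam)) * |R X Y Z W| ≤
      R Y Z Y Z + R X Z X Z + R X W X W + R Y W Y W
        + 2 * R X Y X Y + 2 * R Z W Z W := by
  -- antisymmetry in the last two slots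
  have hlast : ∀ A B C D, R A B C D = - R A B D C := by
    intro A B C D
    calc R A B C D = R C D A B := hpair A B C D
      _ = - R D C A B := hanti C D A B
      _ = - R A B D C := by rw [hpair D C A B]
  -- symmetry of the k-form for swapped arguments
  have flip : ∀ A B, R B A B A = R A B A B := by
    intro A B
    rw [hanti B A B A, hlast A B B A]; ring
  -- Key flag-pinching estimate (Ni–Wilking Lemma):
  have key : ∀ e u v : EuclideanSpace ℝ (Fin n), ⟪e, u⟫ = 0 → ⟪e, v⟫ = 0 → ⟪u, v⟫ = 0 →
      2 * (1 + lam) * |R e u e v| ≤ (1 - lam) * (R e u e u + R e v e v) := by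
    intro e u v heu hev huv
    by_cases he : e = 0
    · simp [he]
    · have hU : ⟪e, u + v⟫ = 0 := by rw [inner_add_right, heu, hev]; ring
      have hV : ⟪e, u - v⟫ = 0 := by rw [inner_sub_right, heu, hev]; ring
      have hnorm : ‖u + v‖ = ‖u - v‖ := by
        have h2 : ‖u + v‖ ^ 2 = ‖u - v‖ ^ 2 := by
          rw [norm_add_sq_real, norm_sub_sq_real, huv]; ring
        exact (pow_left_inj₀ (norm_nonneg _) (norm_nonneg _) two_ne_zero).mp h2
      have h1 := hflag e (u + v) (u - v) he hU hV hnorm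
      have h2 := hflag e (u - v) (u + v) he hV hU hnorm.symm
      have hsym : R e v e u = R e u e v := by rw [hpair]
      have e1 : R e (u + v) e (u + v) = R e u e u + R e v e v + 2 * R e u e v := by
        simp only [map_add, LinearMap.add_apply]; rw [hsym]; ring
      have e2 : R e (u - v) e (u - v) = R e u e u + R e v e v - 2 * R e u e v := by
        simp only [map_sub, LinearMap.sub_apply]; rw [hsym]; ring
      rw [e1, e2] at h1 h2
      rcases abs_cases (R e u e v) with ⟨h, _⟩ | ⟨h, _⟩ <;> rw [h] <;> linarith [h1, h2]
  -- symmetric orthogonality facts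
  have hZY : ⟪Z, Y⟫ = 0 := by rw [real_inner_comm]; exact hYZ
  have hWY : ⟪W, Y⟫ = 0 := by rw [real_inner_comm]; exact hYW
  have hWZ : ⟪W, Z⟫ = 0 := by rw [real_inner_comm]; exact hZW
  have hYX : ⟪Y, X⟫ = 0 := by rw [real_inner_comm]; exact hXY
  -- orthogonality of combined vectors
  have o1Y : ⟪X + Z, Y⟫ = 0 := by rw [inner_add_left, hXY, hZY]; ring
  have o1W : ⟪X + Z, W⟫ = 0 := by rw [inner_add_left, hXW, hZW]; ring
  have o2Y : ⟪X - Z, Y⟫ = 0 := by rw [inner_sub_left, hXY, hZY]; ring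
  have o2W : ⟪X - Z, W⟫ = 0 := by rw [inner_sub_left, hXW, hZW]; ring
  have o3Y : ⟪X + W, Y⟫ = 0 := by rw [inner_add_left, hXY, hWY]; ring
  have o3Z : ⟪X + W, Z⟫ = 0 := by rw [inner_add_left, hXZ, hWZ]; ring
  have o4Y : ⟪X - W, Y⟫ = 0 := by rw [inner_sub_left, hXY, hWY]; ring
  have o4Z : ⟪X - W, Z⟫ = 0 := by rw [inner_sub_left, hXZ, hWZ]; ring
  -- the four flag bounds
  have b1 := key (X + Z) Y W o1Y o1W hYW
  have b2 := key (X - Z) Y W o2Y o2W hYW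
  have b3 := key (X + W) Y Z o3Y o3Z hYZ
  have b4 := key (X - W) Y Z o4Y o4Z hYZ
  -- algebraic identity: 6 R(X,Y,Z,W) as a combination of flag terms
  have hb := hbianchi X Y Z W
  have hc1 : R Z Y X W = - R Y Z X W := hanti Z Y X W
  have hc2 : R W Y X Z = R Z X Y W := by
    calc R W Y X Z = R X Z W Y := (hpair X Z W Y).symm
      _ = - R Z X W Y := hanti X Z W Y
      _ = - R W Y Z X := by rw [hpair Z X W Y]
      _ = R Y W Z X := by rw [hanti W Y Z X, neg_neg]
      _ = R Z X Y W := hpair Y W Z X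
  have exp1 : R (X + Z) Y (X + Z) W
      = R X Y X W + R X Y Z W + R Z Y X W + R Z Y Z W := by
    simp only [map_add, LinearMap.add_apply]; ring
  have exp2 : R (X - Z) Y (X - Z) W
      = R X Y X W - R X Y Z W - R Z Y X W + R Z Y Z W := by
    simp only [sub_eq_add_neg, ← neg_one_smul ℝ Z, map_add, map_smul, LinearMap.add_apply, LinearMap.smul_apply, smul_eq_mul]; ring
  have exp3 : R (X + W) Y (X + W) Z
      = R X Y X Z + R X Y W Z + R W Y X Z + R W Y W Z := by
    simp only [map_add, LinearMap.add_apply]; ring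
  have exp4 : R (X - W) Y (X - W) Z
      = R X Y X Z - R X Y W Z - R W Y X Z + R W Y W Z := by
    simp only [sub_eq_add_neg, ← neg_one_smul ℝ W, map_add, map_smul, LinearMap.add_apply, LinearMap.smul_apply, smul_eq_mul]; ring
  have hWZ' : R X Y W Z = - R X Y Z W := hlast X Y W Z
  have hid : R (X + Z) Y (X + Z) W - R (X - Z) Y (X - Z) W
      - (R (X + W) Y (X + W) Z - R (X - W) Y (X - W) Z) = 6 * R X Y Z W := by
    rw [exp1, exp2, exp3, exp4]; linarith [hb, hc1, hc2, hWZ']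
  -- expansions of the sectional-curvature sums
  have kexp1 : R (X + Z) Y (X + Z) Y + R (X - Z) Y (X - Z) Y
      = 2 * R X Y X Y + 2 * R Z Y Z Y := by
    simp only [sub_eq_add_neg, ← neg_one_smul ℝ Z, map_add, map_smul, LinearMap.add_apply, LinearMap.smul_apply, smul_eq_mul]; ring
  have kexp2 : R (X + Z) W (X + Z) W + R (X - Z) W (X - Z) W
      = 2 * R X W X W + 2 * R Z W Z W := by
    simp only [sub_eq_add_neg, ← neg_one_smul ℝ Z, map_add, map_smul, LinearMap.add_apply, LinearMap.smul_apply, smul_eq_mul]; ring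
  have kexp3 : R (X + W) Y (X + W) Y + R (X - W) Y (X - W) Y
      = 2 * R X Y X Y + 2 * R W Y W Y := by
    simp only [sub_eq_add_neg, ← neg_one_smul ℝ W, map_add, map_smul, LinearMap.add_apply, LinearMap.smul_apply, smul_eq_mul]; ring
  have kexp4 : R (X + W) Z (X + W) Z + R (X - W) Z (X - W) Z
      = 2 * R X Z X Z + 2 * R W Z W Z := by
    simp only [sub_eq_add_neg, ← neg_one_smul ℝ W, map_add, map_smul, LinearMap.add_apply, LinearMap.smul_apply, smul_eq_mul]; ring
  have fZY : R Z Y Z Y = R Y Z Y Z := flip Y Z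
  have fWY : R W Y W Y = R Y W Y W := flip Y W
  have fWZ : R W Z W Z = R Z W Z W := flip Z W
  -- triangle inequality step
  set t1 := R (X + Z) Y (X + Z) W with ht1
  set t2 := R (X - Z) Y (X - Z) W with ht2
  set t3 := R (X + W) Y (X + W) Z with ht3
  set t4 := R (X - W) Y (X - W) Z with ht4
  have htri : 6 * |R X Y Z W| ≤ |t1| + |t2| + |t3| + |t4| := by
    rcases abs_cases (R X Y Z W) with ⟨h, _⟩ | ⟨h, _⟩ <;> rw [h] <;>
      linarith [le_abs_self t1, neg_abs_le t1, le_abs_self t2, neg_abs_le t2,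
        le_abs_self t3, neg_abs_le t3, le_abs_self t4, neg_abs_le t4, hid]
  -- sum of the flag bounds
  have hsumb : 2 * (1 + lam) * (|t1| + |t2| + |t3| + |t4|)
      ≤ (1 - lam) * (R (X + Z) Y (X + Z) Y + R (X + Z) W (X + Z) W
        + R (X - Z) Y (X - Z) Y + R (X - Z) W (X - Z) W
        + R (X + W) Y (X + W) Y + R (X + W) Z (X + W) Z
        + R (X - W) Y (X - W) Y + R (X - W) Z (X - W) Z) := by
    linarith [b1, b2, b3, b4]
  have hK : R (X + Z) Y (X + Z) Y + R (X + Z) W (X + Z) W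
        + R (X - Z) Y (X - Z) Y + R (X - Z) W (X - Z) W
        + R (X + W) Y (X + W) Y + R (X + W) Z (X + W) Z
        + R (X - W) Y (X - W) Y + R (X - W) Z (X - W) Z
      = 2 * (R Y Z Y Z + R X Z X Z + R X W X W + R Y W Y W
        + 2 * R X Y X Y + 2 * R Z W Z W) := by
    linarith [kexp1, kexp2, kexp3, kexp4, fZY, fWY, fWZ]
  rw [hK] at hsumb
  have h1l : (0:ℝ) < 1 - lam := by linarith
  have h1p : (0:ℝ) < 1 + lam := by linarith
  rw [show 6 * ((1 + lam) / (1 - lam)) * |R X Y Z W|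
      = 6 * (1 + lam) * |R X Y Z W| / (1 - lam) by ring, div_le_iff₀ h1l]
  linarith [hsumb, mul_le_mul_of_nonneg_left htri (le_of_lt h1p)]
end

section
/- Let σ ⊂ ℂⁿ be a 2-dimensional complex subspace, with Hermitian inner product ⟨⟨x,y⟩⟩ = ȳᵀx. Then there exist unit vectors U, V ∈ σ with ⟨⟨U,V⟩⟩ = 0, ⟨⟨Ū,V⟩⟩ = 0, such that writing U = X + iY and V = Z + iW with X,Y,Z,W ∈ ℝⁿ, the four real vectors X, Y, Z, W are pairwise orthogonal and satisfy |X| ≥ |Y| and |Z| ≥ |W|. -/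
open scoped RealInnerProductSpace ComplexInnerProductSpace

variable {n : ℕ}

noncomputable def Bform (x y : EuclideanSpace ℂ (Fin n)) : ℂ := ∑ i, x i * y i

lemma Bform_comm (x y : EuclideanSpace ℂ (Fin n)) : Bform x y = Bform y x := by
  simp [Bform, mul_comm]

lemma Bform_add_left (x y z : EuclideanSpace ℂ (Fin n)) :
    Bform (x + y) z = Bform x z + Bform y z := by
  simp [Bform, add_mul, Finset.sum_add_distrib]

lemma Bform_add_right (x y z : EuclideanSpace ℂ (Fin n)) :
    Bform x (y + z) = Bform x y + Bform x z := by
  rw [Bform_comm, Bform_add_left, Bform_comm y, Bform_comm z]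

lemma Bform_smul_left (a : ℂ) (x y : EuclideanSpace ℂ (Fin n)) :
    Bform (a • x) y = a * Bform x y := by
  simp [Bform, Finset.mul_sum, mul_assoc]

lemma Bform_smul_right (a : ℂ) (x y : EuclideanSpace ℂ (Fin n)) :
    Bform x (a • y) = a * Bform x y := by
  rw [Bform_comm, Bform_smul_left, Bform_comm]

lemma phase_exists (b : ℂ) : ∃ c : ℂ, ‖c‖ = 1 ∧ c ^ 2 * b = (‖b‖ : ℂ) := by
  rcases eq_or_ne b 0 with rfl | hb
  · exact ⟨1, by simp, by simp⟩
  · refine ⟨Complex.exp ((-(b.arg) / 2 : ℝ) * Complex.I), ?_, ?_⟩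
    · simpa using Complex.norm_exp_ofReal_mul_I (-(b.arg) / 2)
    · rw [← Complex.exp_nat_mul]
      have h2 : (2 : ℕ) * ((-(b.arg) / 2 : ℝ) * Complex.I) = (-(b.arg) : ℝ) * Complex.I := by
        push_cast; ring
      rw [h2]
      rw [show ((↑(-(b.arg)) : ℂ) * Complex.I) = -(↑b.arg * Complex.I) by push_cast; ring,
        Complex.exp_neg]
      have hb' := Complex.norm_mul_exp_arg_mul_I b
      field_simp [Complex.exp_ne_zero]
      linear_combination -hb'


lemma key_orth (σ : Submodule ℂ (EuclideanSpace ℂ (Fin n))) (U v : EuclideanSpace ℂ (Fin n))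
    (hUσ : U ∈ σ) (hvσ : v ∈ σ) (hU1 : ‖U‖ = 1) (hv1 : ‖v‖ = 1)
    (horth : (inner ℂ U v : ℂ) = 0) (M : ℝ)
    (hM : Bform U U = (M : ℂ))
    (hmax : ∀ w ∈ σ, ‖w‖ = 1 → ‖Bform w w‖ ≤ M) :
    Bform U v = 0 := by
  have hM0 : 0 ≤ M := by
    have := hmax U hUσ hU1
    rw [hM] at this
    simp only [Complex.norm_real, Real.norm_eq_abs] at this
    exact le_trans (abs_nonneg M) this
  set β := Bform U v with hβdef
  set γ := Bform v v with hγdef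
  by_contra hβ
  have hβabs : 0 < ‖β‖ := by
    simpa using hβ
  set c : ℂ := (starRingEnd ℂ) β / (‖β‖ : ℂ) with hcdef
  have hc1 : ‖c‖ = 1 := by
    rw [hcdef, norm_div]
    simp [hβabs.ne']
  have hc2 : c * β = (‖β‖ : ℂ) := by
    rw [hcdef, div_mul_eq_mul_div, mul_comm, Complex.mul_conj']
    rw [show (‖β‖ : ℂ) = (‖β‖ : ℂ) from rfl]
    rw [sq]
    rw [mul_div_assoc, div_self (by exact_mod_cast hβabs.ne'), mul_one]
  have hin : ∀ ε : ℝ, 0 < ε → 2 * ε * ‖β‖ ≤ ε ^ 2 * (M + ‖γ‖) := by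
    intro ε hε
    set a : ℂ := (ε : ℂ) * c with hadef
    set w := U + a • v with hwdef
    have hwσ : w ∈ σ := σ.add_mem hUσ (σ.smul_mem _ hvσ)
    have hna : ‖a‖ = ε := by
      rw [hadef, norm_mul, hc1, mul_one, Complex.norm_real, Real.norm_eq_abs,
        abs_of_pos hε]
    have hwn : ‖w‖ ^ 2 = 1 + ε ^ 2 := by
      rw [hwdef, @norm_add_sq ℂ]
      rw [inner_smul_right, horth, mul_zero, norm_smul, hna, hv1, hU1]
      simp
    have hwpos : (0:ℝ) < ‖w‖ ^ 2 := by rw [hwn]; positivity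
    have hw0 : w ≠ 0 := by
      intro h; rw [h] at hwpos; simp at hwpos
    have hBw : Bform w w = (M : ℂ) + 2 * ε * (‖β‖ : ℂ) + (ε:ℂ)^2 * c^2 * γ := by
      rw [hwdef, Bform_add_left, Bform_add_right, Bform_add_right, Bform_smul_left,
        Bform_smul_right, Bform_smul_left, Bform_smul_right, Bform_comm v U, hM,
        ← hβdef, ← hγdef, hadef]
      linear_combination (2 * (ε:ℂ)) * hc2
    have hupper : ‖Bform w w‖ ≤ M * (1 + ε ^ 2) := by
      set u := (‖w‖⁻¹ : ℂ) • w with hudef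
      have hu1 : ‖u‖ = 1 := by
        rw [hudef, norm_smul]
        simp [norm_ne_zero_iff.mpr hw0]
      have huσ : u ∈ σ := σ.smul_mem _ hwσ
      have hBu : Bform u u = (‖w‖⁻¹ : ℂ) ^ 2 * Bform w w := by
        rw [hudef, Bform_smul_left, Bform_smul_right]; ring
      have := hmax u huσ hu1
      rw [hBu] at this
      rw [norm_mul, norm_pow] at this
      have habs : ‖((‖w‖⁻¹ : ℂ))‖ = ‖w‖⁻¹ := by
        simp [abs_of_nonneg (inv_nonneg.mpr (norm_nonneg w))]
      rw [habs] at this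
      have hwne : (0:ℝ) < ‖w‖ := norm_pos_iff.mpr hw0
      calc ‖Bform w w‖ = ‖w‖ ^ 2 * (‖w‖⁻¹ ^ 2 * ‖Bform w w‖) := by
            field_simp
        _ ≤ ‖w‖ ^ 2 * M := by
            apply mul_le_mul_of_nonneg_left this (by positivity)
        _ = M * (1 + ε ^ 2) := by rw [hwn]; ring
    have hlower : M + 2 * ε * ‖β‖ - ε ^ 2 * ‖γ‖
        ≤ ‖Bform w w‖ := by
      have hre : (Bform w w).re = M + 2 * ε * ‖β‖ + ((ε:ℂ)^2 * c^2 * γ).re := by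
        rw [hBw]; simp
      have h1 : (Bform w w).re ≤ ‖Bform w w‖ := Complex.re_le_norm _
      have h2 : -(ε ^ 2 * ‖γ‖) ≤ ((ε:ℂ)^2 * c^2 * γ).re := by
        have := Complex.abs_re_le_norm ((ε:ℂ)^2 * c^2 * γ)
        have habs : ‖(ε:ℂ)^2 * c^2 * γ‖ = ε ^ 2 * ‖γ‖ := by
          rw [norm_mul, norm_mul, norm_pow, norm_pow]
          have : ‖c‖ = 1 := hc1
          rw [this]
          simp [sq_abs]
        rw [habs] at this
        linarith [neg_abs_le (((ε:ℂ)^2 * c^2 * γ).re)]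
      linarith
    nlinarith [hβabs]
  have hQ : 0 < M + ‖γ‖ + 1 := by positivity
  have := hin (‖β‖ / (M + ‖γ‖ + 1)) (by positivity)
  set q := ‖β‖ with hq
  set Q := M + ‖γ‖ with hQdef
  rw [div_pow] at this
  have h2 : 2 * (q / (Q + 1)) * q ≤ q ^ 2 / (Q + 1) ^ 2 * Q := this
  have hQ0 : 0 ≤ Q := by positivity
  have e1 : 2 * (q / (Q + 1)) * q * (Q + 1) ^ 2 = 2 * q ^ 2 * (Q + 1) := by
    field_simp
  have e2 : q ^ 2 / (Q + 1) ^ 2 * Q * (Q + 1) ^ 2 = q ^ 2 * Q := by field_simp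
  have h3 : 2 * q ^ 2 * (Q + 1) ≤ q ^ 2 * Q := by
    rw [← e1, ← e2]
    exact mul_le_mul_of_nonneg_right h2 (by positivity)
  nlinarith [pow_pos hβabs 2, hQ0]

lemma einner (x y : EuclideanSpace ℝ (Fin n)) : ⟪x, y⟫ = ∑ i, x i * y i := by
  simp [PiLp.inner_apply, RCLike.inner_apply, mul_comm]


lemma inner_formula (A B : EuclideanSpace ℂ (Fin n)) :
    (inner ℂ A B : ℂ) = ∑ i, (starRingEnd ℂ) (A i) * B i := by
  simp [PiLp.inner_apply, RCLike.inner_apply, mul_comm]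

lemma cross_sums (A B : EuclideanSpace ℂ (Fin n)) (hI : (inner ℂ A B : ℂ) = 0)
    (hB : Bform A B = 0) :
    (∑ i, (A i).re * (B i).re = 0) ∧ (∑ i, (A i).re * (B i).im = 0) ∧
    (∑ i, (A i).im * (B i).re = 0) ∧ (∑ i, (A i).im * (B i).im = 0) := by
  rw [inner_formula] at hI
  rw [Bform] at hB
  have r1 := congrArg Complex.re hI
  have i1 := congrArg Complex.im hI
  have r2 := congrArg Complex.re hB
  have i2 := congrArg Complex.im hB
  rw [Complex.re_sum] at r1 r2
  rw [Complex.im_sum] at i1 i2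
  simp only [Complex.mul_re, Complex.mul_im, Complex.conj_re, Complex.conj_im,
    Complex.zero_re, Complex.zero_im] at r1 i1 r2 i2
  have e1 : ∑ i, ((A i).re * (B i).re - -(A i).im * (B i).im)
      = ∑ i, (A i).re * (B i).re + ∑ i, (A i).im * (B i).im := by
    rw [← Finset.sum_add_distrib]; apply Finset.sum_congr rfl; intros; ring
  have e2 : ∑ i, ((A i).re * (B i).im + -(A i).im * (B i).re)
      = ∑ i, (A i).re * (B i).im - ∑ i, (A i).im * (B i).re := by
    rw [← Finset.sum_sub_distrib]; apply Finset.sum_congr rfl; intros; ring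
  have e3 : ∑ i, ((A i).re * (B i).re - (A i).im * (B i).im)
      = ∑ i, (A i).re * (B i).re - ∑ i, (A i).im * (B i).im := by
    rw [← Finset.sum_sub_distrib]
  have e4 : ∑ i, ((A i).re * (B i).im + (A i).im * (B i).re)
      = ∑ i, (A i).re * (B i).im + ∑ i, (A i).im * (B i).re := by
    rw [← Finset.sum_add_distrib]
  rw [e1] at r1
  rw [e2] at i1
  rw [e3] at r2
  rw [e4] at i2
  refine ⟨by linarith, by linarith, by linarith, by linarith⟩

lemma self_sums (A : EuclideanSpace ℂ (Fin n)) (r : ℝ) (hr : 0 ≤ r)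
    (h : Bform A A = (r : ℂ)) :
    (∑ i, (A i).re * (A i).im = 0) ∧
    (∑ i, (A i).im * (A i).im ≤ ∑ i, (A i).re * (A i).re) := by
  rw [Bform] at h
  have r2 := congrArg Complex.re h
  have i2 := congrArg Complex.im h
  rw [Complex.re_sum] at r2
  rw [Complex.im_sum] at i2
  simp only [Complex.mul_re, Complex.mul_im, Complex.ofReal_re, Complex.ofReal_im] at r2 i2
  have e3 : ∑ i, ((A i).re * (A i).re - (A i).im * (A i).im)
      = ∑ i, (A i).re * (A i).re - ∑ i, (A i).im * (A i).im := by
    rw [← Finset.sum_sub_distrib]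
  have e4 : ∑ i, ((A i).re * (A i).im + (A i).im * (A i).re)
      = 2 * ∑ i, (A i).re * (A i).im := by
    rw [Finset.mul_sum]; apply Finset.sum_congr rfl; intros; ring
  rw [e3] at r2
  rw [e4] at i2
  exact ⟨by linarith, by linarith⟩

set_option maxHeartbeats 1000000 in
/-- The good basis of a complex 2-plane used in the proof of Theorem 1.1 of
Ni–Wilking: any 2-dimensional complex subspace `σ ⊂ ℂⁿ` admits Hermitian-unit
vectors `U, V` which are Hermitian-orthogonal, with `Ū` also
Hermitian-orthogonal to `V` (equivalently `∑ᵢ Uᵢ Vᵢ = 0`), such that writing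
`U = X + iY`, `V = Z + iW` with real vectors `X, Y, Z, W`, the four vectors are
pairwise orthogonal and `|X| ≥ |Y|`, `|Z| ≥ |W|`. -/
theorem stmt_9 (n : ℕ) (σ : Submodule ℂ (EuclideanSpace ℂ (Fin n)))
    (hσ : Module.finrank ℂ σ = 2) :
    ∃ (U V : EuclideanSpace ℂ (Fin n)) (X Y Z W : EuclideanSpace ℝ (Fin n)),
      U ∈ σ ∧ V ∈ σ ∧ ‖U‖ = 1 ∧ ‖V‖ = 1 ∧
      (inner ℂ U V : ℂ) = 0 ∧ (∑ i, U i * V i) = 0 ∧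
      (∀ i, U i = (X i : ℂ) + Complex.I * (Y i : ℂ)) ∧
      (∀ i, V i = (Z i : ℂ) + Complex.I * (W i : ℂ)) ∧
      ⟪X, Y⟫ = 0 ∧ ⟪X, Z⟫ = 0 ∧ ⟪X, W⟫ = 0 ∧
      ⟪Y, Z⟫ = 0 ∧ ⟪Y, W⟫ = 0 ∧ ⟪Z, W⟫ = 0 ∧
      ‖Y‖ ≤ ‖X‖ ∧ ‖W‖ ≤ ‖Z‖ := by
  classical
  -- a unit vector exists in σ
  haveI : Nontrivial σ := Module.nontrivial_of_finrank_pos (R := ℂ) (by rw [hσ]; norm_num)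
  obtain ⟨x, hx0⟩ := exists_ne (0 : σ)
  have hxn : (0:ℝ) < ‖x‖ := norm_pos_iff.mpr hx0
  set u₀' : σ := (‖x‖⁻¹ : ℂ) • x with hu₀'def
  have hu₀'1 : ‖u₀'‖ = 1 := by
    rw [hu₀'def, norm_smul]
    rw [norm_inv, Complex.norm_real, Real.norm_eq_abs, abs_of_pos hxn]
    exact inv_mul_cancel₀ hxn.ne'
  -- maximize the bilinear form over the unit sphere of σ
  have hcont : Continuous fun w : σ =>
      ‖Bform (w : EuclideanSpace ℂ (Fin n)) (w : EuclideanSpace ℂ (Fin n))‖ := by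
    apply continuous_norm.comp
    apply continuous_finset_sum
    intro i _
    exact ((EuclideanSpace.proj i).continuous.comp continuous_subtype_val).mul
      ((EuclideanSpace.proj i).continuous.comp continuous_subtype_val)
  obtain ⟨u₀, hu₀S, hmax0⟩ := (isCompact_sphere (0:σ) 1).exists_isMaxOn
    ⟨u₀', mem_sphere_zero_iff_norm.mpr hu₀'1⟩ hcont.continuousOn
  set M : ℝ := ‖Bform (u₀ : EuclideanSpace ℂ (Fin n)) (u₀ : EuclideanSpace ℂ (Fin n))‖ with hMdef
  have hu₀1 : ‖(u₀ : EuclideanSpace ℂ (Fin n))‖ = 1 := mem_sphere_zero_iff_norm.mp hu₀S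
  rw [isMaxOn_iff] at hmax0
  have hmax' : ∀ w ∈ σ, ‖w‖ = 1 → ‖Bform w w‖ ≤ M := by
    intro w hw h1
    exact hmax0 ⟨w, hw⟩ (mem_sphere_zero_iff_norm.mpr (show ‖(⟨w, hw⟩:σ)‖ = 1 from h1))
  -- fix the phase of U
  obtain ⟨c, hc1, hc2⟩ := phase_exists (Bform (u₀ : EuclideanSpace ℂ (Fin n)) u₀)
  set U : EuclideanSpace ℂ (Fin n) := c • (u₀ : EuclideanSpace ℂ (Fin n)) with hUdef
  have hUσ : U ∈ σ := σ.smul_mem _ u₀.2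
  have hU1 : ‖U‖ = 1 := by rw [hUdef, norm_smul, hc1, hu₀1, mul_one]
  have hMU : Bform U U = (M : ℂ) := by
    rw [hUdef, Bform_smul_left, Bform_smul_right, ← mul_assoc, ← sq, hc2, hMdef]
  -- find a Hermitian-orthogonal unit vector v in σ (Gram-Schmidt)
  have hUne : U ≠ 0 := by
    intro h; rw [h] at hU1; simp at hU1
  have hnle : ¬ σ ≤ ℂ ∙ U := by
    intro hle
    have h1 : Module.finrank ℂ σ ≤ Module.finrank ℂ (ℂ ∙ U) :=
      Submodule.finrank_mono hle
    rw [hσ, finrank_span_singleton hUne] at h1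
    omega
  obtain ⟨w, hwσ, hwns⟩ := SetLike.not_le_iff_exists.mp hnle
  set v₀ : EuclideanSpace ℂ (Fin n) := w - (inner ℂ U w : ℂ) • U with hv₀def
  have hv₀σ : v₀ ∈ σ := σ.sub_mem hwσ (σ.smul_mem _ hUσ)
  have hv₀ne : v₀ ≠ 0 := by
    intro h
    exact hwns (Submodule.mem_span_singleton.mpr
      ⟨(inner ℂ U w : ℂ), (sub_eq_zero.mp h).symm⟩)
  have hv₀orth : (inner ℂ U v₀ : ℂ) = 0 := by
    rw [hv₀def, inner_sub_right, inner_smul_right]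
    rw [@inner_self_eq_norm_sq_to_K ℂ, hU1]
    push_cast
    ring
  have hv₀n : (0:ℝ) < ‖v₀‖ := norm_pos_iff.mpr hv₀ne
  set v : EuclideanSpace ℂ (Fin n) := (‖v₀‖⁻¹ : ℂ) • v₀ with hvdef
  have hvmem : v ∈ σ := σ.smul_mem _ hv₀σ
  have hv1 : ‖v‖ = 1 := by
    rw [hvdef, norm_smul, norm_inv, Complex.norm_real, Real.norm_eq_abs,
      abs_of_pos hv₀n]
    exact inv_mul_cancel₀ hv₀n.ne'
  have horth : (inner ℂ U v : ℂ) = 0 := by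
    rw [hvdef, inner_smul_right, hv₀orth, mul_zero]
  -- the bilinear form vanishes on (U, v)
  have hβ : Bform U v = 0 := key_orth σ U v hUσ hvmem hU1 hv1 horth M hMU hmax'
  -- fix the phase of V
  obtain ⟨d, hd1, hd2⟩ := phase_exists (Bform v v)
  set V : EuclideanSpace ℂ (Fin n) := d • v with hVdef
  have hVσ : V ∈ σ := σ.smul_mem _ hvmem
  have hV1 : ‖V‖ = 1 := by rw [hVdef, norm_smul, hd1, hv1, mul_one]
  set N : ℝ := ‖Bform v v‖ with hNdef
  have hNV : Bform V V = (N : ℂ) := by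
    rw [hVdef, Bform_smul_left, Bform_smul_right, ← mul_assoc, ← sq, hd2, hNdef]
  have hUV : (inner ℂ U V : ℂ) = 0 := by
    rw [hVdef, inner_smul_right, horth, mul_zero]
  have hBUV : Bform U V = 0 := by
    rw [hVdef, Bform_smul_right, hβ, mul_zero]
  -- define the real and imaginary parts
  have hM0 : 0 ≤ M := by
    have := hmax' U hUσ hU1
    rw [hMU] at this
    simp only [Complex.norm_real, Real.norm_eq_abs] at this
    exact le_trans (abs_nonneg M) this
  have hN0 : 0 ≤ N := norm_nonneg _
  obtain ⟨hc1', hc2', hc3', hc4'⟩ := cross_sums U V hUV hBUV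
  obtain ⟨hs1, hs2⟩ := self_sums U M hM0 hMU
  obtain ⟨hs3, hs4⟩ := self_sums V N hN0 hNV
  set X : EuclideanSpace ℝ (Fin n) := WithLp.toLp 2 (fun i => (U i).re) with hXdef
  set Y : EuclideanSpace ℝ (Fin n) := WithLp.toLp 2 (fun i => (U i).im) with hYdef
  set Z : EuclideanSpace ℝ (Fin n) := WithLp.toLp 2 (fun i => (V i).re) with hZdef
  set W : EuclideanSpace ℝ (Fin n) := WithLp.toLp 2 (fun i => (V i).im) with hWdef
  have hXi : ∀ i, X i = (U i).re := fun i => rfl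
  have hYi : ∀ i, Y i = (U i).im := fun i => rfl
  have hZi : ∀ i, Z i = (V i).re := fun i => rfl
  have hWi : ∀ i, W i = (V i).im := fun i => rfl
  have hXY : ∀ i, U i = (X i : ℂ) + Complex.I * (Y i : ℂ) := by
    intro i
    rw [hXi, hYi, mul_comm]
    exact (Complex.re_add_im (U i)).symm
  have hZW : ∀ i, V i = (Z i : ℂ) + Complex.I * (W i : ℂ) := by
    intro i
    rw [hZi, hWi, mul_comm]
    exact (Complex.re_add_im (V i)).symm
  have hnX : ‖X‖ ^ 2 = ∑ i, (U i).re * (U i).re := by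
    rw [← real_inner_self_eq_norm_sq, einner]
  have hnY : ‖Y‖ ^ 2 = ∑ i, (U i).im * (U i).im := by
    rw [← real_inner_self_eq_norm_sq, einner]
  have hnZ : ‖Z‖ ^ 2 = ∑ i, (V i).re * (V i).re := by
    rw [← real_inner_self_eq_norm_sq, einner]
  have hnW : ‖W‖ ^ 2 = ∑ i, (V i).im * (V i).im := by
    rw [← real_inner_self_eq_norm_sq, einner]
  refine ⟨U, V, X, Y, Z, W, hUσ, hVσ, hU1, hV1, hUV, hBUV, hXY, hZW, ?_, ?_, ?_, ?_, ?_, ?_, ?_, ?_⟩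
  · rw [einner]
    rw [show ∑ i, X i * Y i = ∑ i, (U i).re * (U i).im from
      Finset.sum_congr rfl fun i _ => by rw [hXi, hYi]]
    exact hs1
  · rw [einner]
    rw [show ∑ i, X i * Z i = ∑ i, (U i).re * (V i).re from
      Finset.sum_congr rfl fun i _ => by rw [hXi, hZi]]
    exact hc1'
  · rw [einner]
    rw [show ∑ i, X i * W i = ∑ i, (U i).re * (V i).im from
      Finset.sum_congr rfl fun i _ => by rw [hXi, hWi]]
    exact hc2'
  · rw [einner]
    rw [show ∑ i, Y i * Z i = ∑ i, (U i).im * (V i).re from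
      Finset.sum_congr rfl fun i _ => by rw [hYi, hZi]]
    exact hc3'
  · rw [einner]
    rw [show ∑ i, Y i * W i = ∑ i, (U i).im * (V i).im from
      Finset.sum_congr rfl fun i _ => by rw [hYi, hWi]]
    exact hc4'
  · rw [einner]
    rw [show ∑ i, Z i * W i = ∑ i, (V i).re * (V i).im from
      Finset.sum_congr rfl fun i _ => by rw [hZi, hWi]]
    exact hs3
  · have h2 : ‖Y‖ ^ 2 ≤ ‖X‖ ^ 2 := by rw [hnX, hnY]; exact hs2
    exact (pow_le_pow_iff_left₀ (norm_nonneg Y) (norm_nonneg X) two_ne_zero).mp h2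
  · have h2 : ‖W‖ ^ 2 ≤ ‖Z‖ ^ 2 := by rw [hnZ, hnW]; exact hs4
    exact (pow_le_pow_iff_left₀ (norm_nonneg W) (norm_nonneg Z) two_ne_zero).mp h2
end

section
/- An algebraic curvature tensor on ℝⁿ with λ-pinched flag curvature and nonnegative sectional curvature has λ²-pinched sectional curvature: K(σ₁) ≥ λ²·K(σ₂) for any two 2-planes σ₁, σ₂. -/
open scoped RealInnerProductSpace

/-- An algebraic curvature tensor on `ℝⁿ` with nonnegative sectional curvature
and `λ`-pinched flag curvature has `λ²`-pinched sectional curvature: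
`K(σ₁) ≥ λ²·K(σ₂)` for any two 2-planes, given by orthonormal bases
`{u₁, v₁}` and `{u₂, v₂}`. -/
theorem stmt_10 (n : ℕ)
    (R : EuclideanSpace ℝ (Fin n) →ₗ[ℝ] EuclideanSpace ℝ (Fin n) →ₗ[ℝ]
      EuclideanSpace ℝ (Fin n) →ₗ[ℝ] EuclideanSpace ℝ (Fin n) →ₗ[ℝ] ℝ)
    (hanti : ∀ X Y Z W, R X Y Z W = - R Y X Z W)
    (hpair : ∀ X Y Z W, R X Y Z W = R Z W X Y)
    (hbianchi : ∀ X Y Z W, R X Y Z W + R Y Z X W + R Z X Y W = 0)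
    (hsec : ∀ X Y, 0 ≤ R X Y X Y)
    (lam : ℝ) (hlam0 : 0 < lam) (hlam1 : lam ≤ 1)
    (hflag : ∀ e X Y : EuclideanSpace ℝ (Fin n), e ≠ 0 → ⟪e, X⟫ = 0 → ⟪e, Y⟫ = 0 →
      ‖X‖ = ‖Y‖ → lam * R e Y e Y ≤ R e X e X)
    (u₁ v₁ u₂ v₂ : EuclideanSpace ℝ (Fin n))
    (hu₁ : ‖u₁‖ = 1) (hv₁ : ‖v₁‖ = 1) (h₁ : ⟪u₁, v₁⟫ = 0)
    (hu₂ : ‖u₂‖ = 1) (hv₂ : ‖v₂‖ = 1) (h₂ : ⟪u₂, v₂⟫ = 0) :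
    lam ^ 2 * R u₂ v₂ u₂ v₂ ≤ R u₁ v₁ u₁ v₁ := by
  -- antisymmetry in the last two arguments
  have hanti' : ∀ X Y Z W, R X Y Z W = - R X Y W Z := by
    intro X Y Z W
    rw [hpair, hanti, hpair]
  -- swap symmetry for sectional curvature
  have hswap : ∀ X Y, R X Y X Y = R Y X Y X := by
    intro X Y
    rw [hanti, hanti' Y X X Y]; ring
  have hu₁0 : u₁ ≠ 0 := by
    intro h; rw [h, norm_zero] at hu₁; norm_num at hu₁
  set a : ℝ := ⟪u₁, u₂⟫ with ha
  set b : ℝ := ⟪u₁, v₂⟫ with hb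
  by_cases hs : a ^ 2 + b ^ 2 = 0
  · -- degenerate case: u₁ ⊥ span(u₂, v₂)
    have ha0 : a = 0 := by nlinarith [sq_nonneg a, sq_nonneg b]
    have hb0 : b = 0 := by nlinarith [sq_nonneg a, sq_nonneg b]
    have hv₂0 : v₂ ≠ 0 := by
      intro h; rw [h, norm_zero] at hv₂; norm_num at hv₂
    have step1 : lam * R u₁ v₂ u₁ v₂ ≤ R u₁ v₁ u₁ v₁ :=
      hflag u₁ v₁ v₂ hu₁0 h₁ hb0 (by rw [hv₁, hv₂])
    have step2 : lam * R v₂ u₂ v₂ u₂ ≤ R v₂ u₁ v₂ u₁ :=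
      hflag v₂ u₁ u₂ hv₂0 (by rw [real_inner_comm]; exact hb0)
        (by rw [real_inner_comm]; exact h₂) (by rw [hu₁, hu₂])
    rw [hswap v₂ u₂] at step2
    rw [hswap v₂ u₁] at step2
    nlinarith
  · have hs' : 0 < a ^ 2 + b ^ 2 := lt_of_le_of_ne (by positivity) (Ne.symm hs)
    set s : ℝ := Real.sqrt (a ^ 2 + b ^ 2) with hsdef
    have hs0 : 0 < s := Real.sqrt_pos.mpr hs'
    have hs2 : s ^ 2 = a ^ 2 + b ^ 2 := Real.sq_sqrt (le_of_lt hs')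
    set w : EuclideanSpace ℝ (Fin n) := b • u₂ - a • v₂ with hw
    set Y : EuclideanSpace ℝ (Fin n) := a • u₂ + b • v₂ with hY
    -- inner product facts
    have huu₂ : ⟪u₂, u₂⟫ = (1:ℝ) := by
      rw [real_inner_self_eq_norm_sq, hu₂]; norm_num
    have hvv₂ : ⟪v₂, v₂⟫ = (1:ℝ) := by
      rw [real_inner_self_eq_norm_sq, hv₂]; norm_num
    have h₂' : ⟪v₂, u₂⟫ = (0:ℝ) := by rw [real_inner_comm]; exact h₂
    have hu₁w : ⟪u₁, w⟫ = (0:ℝ) := by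
      simp only [hw, inner_sub_right, real_inner_smul_right, ← ha, ← hb]
      ring
    have hwu₁ : ⟪w, u₁⟫ = (0:ℝ) := by rw [real_inner_comm]; exact hu₁w
    have hwY : ⟪w, Y⟫ = (0:ℝ) := by
      simp only [hw, hY, inner_sub_left, inner_add_right, real_inner_smul_left,
        real_inner_smul_right, huu₂, hvv₂, h₂, h₂']
      ring
    have hwnorm : ‖w‖ = s := by
      have : ‖w‖ ^ 2 = a ^ 2 + b ^ 2 := by
        rw [← real_inner_self_eq_norm_sq]
        simp only [hw, inner_sub_left, inner_sub_right, real_inner_smul_left,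
          real_inner_smul_right, huu₂, hvv₂, h₂, h₂']
        ring
      rw [← Real.sqrt_sq (norm_nonneg w), this]
    have hYnorm : ‖Y‖ = s := by
      have : ‖Y‖ ^ 2 = a ^ 2 + b ^ 2 := by
        rw [← real_inner_self_eq_norm_sq]
        simp only [hY, inner_add_left, inner_add_right, real_inner_smul_left,
          real_inner_smul_right, huu₂, hvv₂, h₂, h₂']
        ring
      rw [← Real.sqrt_sq (norm_nonneg Y), this]
    have hw0 : w ≠ 0 := by
      intro h; rw [h, norm_zero] at hwnorm; exact absurd hwnorm.symm (ne_of_gt hs0)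
    -- zero lemmas for the expansion
    have z1 : ∀ Z W, R u₂ u₂ Z W = 0 := by
      intro Z W; have := hanti u₂ u₂ Z W; linarith
    have z2 : ∀ Z W, R v₂ v₂ Z W = 0 := by
      intro Z W; have := hanti v₂ v₂ Z W; linarith
    have z3 : ∀ X Y, R X Y u₂ u₂ = 0 := by
      intro X Y; rw [hpair]; exact z1 _ _
    have z4 : ∀ X Y, R X Y v₂ v₂ = 0 := by
      intro X Y; rw [hpair]; exact z2 _ _
    have e1 : ∀ Z W, R v₂ u₂ Z W = - R u₂ v₂ Z W := fun Z W => hanti v₂ u₂ Z W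
    have e2 : ∀ X Y, R X Y v₂ u₂ = - R X Y u₂ v₂ := fun X Y => hanti' X Y v₂ u₂
    -- K(w, Y) = (a² + b²)² K(u₂, v₂)
    have hplane : R w Y w Y = (a ^ 2 + b ^ 2) ^ 2 * R u₂ v₂ u₂ v₂ := by
      rw [show w = b • u₂ + (-a) • v₂ by rw [hw, neg_smul, sub_eq_add_neg]]
      simp only [hw, hY, map_add, map_sub, map_smul, LinearMap.add_apply,
        LinearMap.sub_apply, LinearMap.smul_apply, smul_eq_mul, z1, z2, z3, z4,
        e1, e2]
      ring
    -- scaling of K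
    have hscale : ∀ (c : ℝ) (e X : EuclideanSpace ℝ (Fin n)),
        R e (c • X) e (c • X) = c ^ 2 * R e X e X := by
      intro c e X
      simp only [map_smul, LinearMap.smul_apply, smul_eq_mul]
      ring
    -- step 1: flag at u₁, comparing v₁ with w (scaled)
    have step1 : lam * R u₁ w u₁ w ≤ R u₁ (s • v₁) u₁ (s • v₁) := by
      refine hflag u₁ (s • v₁) w hu₁0 ?_ hu₁w ?_
      · rw [real_inner_smul_right, h₁]; ring
      · rw [norm_smul, hv₁, hwnorm]; simp [abs_of_pos hs0]
    rw [hscale] at step1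
    -- step 2: flag at w, comparing u₁ (scaled) with Y
    have step2 : lam * R w Y w Y ≤ R w (s • u₁) w (s • u₁) := by
      refine hflag w (s • u₁) Y hw0 ?_ hwY ?_
      · rw [real_inner_smul_right, hwu₁]; ring
      · rw [norm_smul, hu₁, hYnorm]; simp [abs_of_pos hs0]
    rw [hscale, hplane] at step2
    -- combine
    have hswapw : R w u₁ w u₁ = R u₁ w u₁ w := (hswap u₁ w).symm
    rw [hswapw] at step2
    -- λ² (a²+b²)² K₂ ≤ λ s² K(u₁,w) ≤ s² · s² K₁
    have A := mul_le_mul_of_nonneg_left step2 (le_of_lt hlam0)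
    have B := mul_le_mul_of_nonneg_left step1 (sq_nonneg s)
    have key : lam ^ 2 * ((a ^ 2 + b ^ 2) ^ 2 * R u₂ v₂ u₂ v₂) ≤
        (a ^ 2 + b ^ 2) ^ 2 * R u₁ v₁ u₁ v₁ := by
      calc lam ^ 2 * ((a ^ 2 + b ^ 2) ^ 2 * R u₂ v₂ u₂ v₂)
          = lam * (lam * ((a ^ 2 + b ^ 2) ^ 2 * R u₂ v₂ u₂ v₂)) := by ring
        _ ≤ lam * (s ^ 2 * R u₁ w u₁ w) := A
        _ = s ^ 2 * (lam * R u₁ w u₁ w) := by ring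
        _ ≤ s ^ 2 * (s ^ 2 * R u₁ v₁ u₁ v₁) := B
        _ = (a ^ 2 + b ^ 2) ^ 2 * R u₁ v₁ u₁ v₁ := by rw [← hs2]; ring
    have hc : 0 < (a ^ 2 + b ^ 2) ^ 2 := by positivity
    exact le_of_mul_le_mul_left (by linarith) hc
end

section
/- Define R on ℝ⁴ by Rm = 4(e₁∧e₂)⊗(e₁∧e₂) + 2(e₁∧e₃)⊗(e₁∧e₃) + 2(e₁∧e₄)⊗(e₁∧e₄) + 2(e₂∧e₃)⊗(e₂∧e₃) + 2(e₂∧e₄)⊗(e₂∧e₄) + (e₃∧e₄)⊗(e₃∧e₄), where {eᵢ} is the standard orthonormal basis. Then Rm is an algebraic curvature operator (symmetric on Λ²ℝ⁴ and satisfying the first Bianchi identity) whose sectional curvature is exactly 1/4-pinched: 1 ≤ K(σ) ≤ 4 for every 2-plane σ. -/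
open scoped RealInnerProductSpace

/-- The Plücker coordinate `⟨eᵢ ∧ eⱼ, X ∧ Y⟩`. -/
def pluck (i j : Fin 4) (X Y : EuclideanSpace ℝ (Fin 4)) : ℝ :=
  X i * Y j - X j * Y i

/-- The curvature 4-tensor `R(X,Y,Z,W) = ⟨Rm(X∧Y), Z∧W⟩` of the Ni–Wilking
example `Rm = 4(e₁∧e₂)⊗(e₁∧e₂) + 2(e₁∧e₃)⊗(e₁∧e₃) + 2(e₁∧e₄)⊗(e₁∧e₄)
+ 2(e₂∧e₃)⊗(e₂∧e₃) + 2(e₂∧e₄)⊗(e₂∧e₄) + (e₃∧e₄)⊗(e₃∧e₄)` on `Λ²ℝ⁴`. -/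
def Rex (X Y Z W : EuclideanSpace ℝ (Fin 4)) : ℝ :=
  4 * pluck 0 1 X Y * pluck 0 1 Z W + 2 * pluck 0 2 X Y * pluck 0 2 Z W
    + 2 * pluck 0 3 X Y * pluck 0 3 Z W + 2 * pluck 1 2 X Y * pluck 1 2 Z W
    + 2 * pluck 1 3 X Y * pluck 1 3 Z W + pluck 2 3 X Y * pluck 2 3 Z W

/-- The example `Rm` is an algebraic curvature operator (its 4-tensor has the
symmetries of a curvature tensor and satisfies the first Bianchi identity) and
its sectional curvature is exactly `1/4`-pinched: `1 ≤ K(σ) ≤ 4` for every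
2-plane `σ`. -/
theorem stmt_11 :
    (∀ X Y Z W, Rex X Y Z W = - Rex Y X Z W) ∧
    (∀ X Y Z W, Rex X Y Z W = Rex Z W X Y) ∧
    (∀ X Y Z W, Rex X Y Z W + Rex Y Z X W + Rex Z X Y W = 0) ∧
    (∀ u v : EuclideanSpace ℝ (Fin 4), ‖u‖ = 1 → ‖v‖ = 1 → ⟪u, v⟫ = 0 →
      1 ≤ Rex u v u v ∧ Rex u v u v ≤ 4) := by

  refine ⟨fun X Y Z W => by simp [Rex, pluck]; ring,
         fun X Y Z W => by simp [Rex, pluck]; ring,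
         fun X Y Z W => by simp [Rex, pluck]; ring,
         fun u v hu hv huv => ?_⟩
  have hu' : ⟪u, u⟫ = 1 := by rw [real_inner_self_eq_norm_sq, hu]; norm_num
  have hv' : ⟪v, v⟫ = 1 := by rw [real_inner_self_eq_norm_sq, hv]; norm_num
  simp only [PiLp.inner_apply, RCLike.inner_apply, conj_trivial, Fin.sum_univ_four] at hu' hv' huv
  have key : pluck 0 1 u v ^ 2 + pluck 0 2 u v ^ 2 + pluck 0 3 u v ^ 2
      + pluck 1 2 u v ^ 2 + pluck 1 3 u v ^ 2 + pluck 2 3 u v ^ 2 = 1 := by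
    have : (u 0 * u 0 + u 1 * u 1 + u 2 * u 2 + u 3 * u 3) *
        (v 0 * v 0 + v 1 * v 1 + v 2 * v 2 + v 3 * v 3) -
        (u 0 * v 0 + u 1 * v 1 + u 2 * v 2 + u 3 * v 3) ^ 2 =
        pluck 0 1 u v ^ 2 + pluck 0 2 u v ^ 2 + pluck 0 3 u v ^ 2
        + pluck 1 2 u v ^ 2 + pluck 1 3 u v ^ 2 + pluck 2 3 u v ^ 2 := by
      simp [pluck]; ring
    rw [← this, hu', hv', show u 0 * v 0 + u 1 * v 1 + u 2 * v 2 + u 3 * v 3 = 0 by linear_combination huv]; ring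
  have hR : Rex u v u v = 4 * pluck 0 1 u v ^ 2 + 2 * pluck 0 2 u v ^ 2
      + 2 * pluck 0 3 u v ^ 2 + 2 * pluck 1 2 u v ^ 2 + 2 * pluck 1 3 u v ^ 2
      + pluck 2 3 u v ^ 2 := by simp [Rex]; ring
  constructor
  · nlinarith [sq_nonneg (pluck 0 1 u v), sq_nonneg (pluck 0 2 u v), sq_nonneg (pluck 0 3 u v),
      sq_nonneg (pluck 1 2 u v), sq_nonneg (pluck 1 3 u v), sq_nonneg (pluck 2 3 u v),
      key, sq_abs (pluck 0 1 u v)]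
  · nlinarith [sq_nonneg (pluck 0 1 u v), sq_nonneg (pluck 0 2 u v), sq_nonneg (pluck 0 3 u v),
      sq_nonneg (pluck 1 2 u v), sq_nonneg (pluck 1 3 u v), sq_nonneg (pluck 2 3 u v), key]
end

section
/- For the algebraic curvature operator Rm = 4(e₁∧e₂)⊗(e₁∧e₂) + 2(e₁∧e₃)⊗(e₁∧e₃) + 2(e₁∧e₄)⊗(e₁∧e₄) + 2(e₂∧e₃)⊗(e₂∧e₃) + 2(e₂∧e₄)⊗(e₂∧e₄) + (e₃∧e₄)⊗(e₃∧e₄) on ℝ⁴ and the unit vector e = cosθ·e₁ + sinθ·e₃, the flag form R_e restricted to e^⊥ has eigenvectors e₂, e₄, and −sinθ·e₁ + cosθ·e₃ with eigenvalues 2cos²θ + 2, 1 + cos²θ, and 2 respectively. -/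
open scoped RealInnerProductSpace

/-- The `i`-th standard basis vector of `ℝ⁴`. -/
noncomputable def sbv (i : Fin 4) : EuclideanSpace ℝ (Fin 4) := EuclideanSpace.single i 1

/-- For the flag direction `e = cosθ·e₁ + sinθ·e₃`, the flag form
`R_e(·,·) = R(e,·,e,·)` restricted to `e^⊥` has eigenvectors `e₂`, `e₄` and
`−sinθ·e₁ + cosθ·e₃`, with eigenvalues `2cos²θ + 2`, `1 + cos²θ` and `2`
respectively. -/
theorem stmt_12 (θ : ℝ) :
    (∀ X : EuclideanSpace ℝ (Fin 4),
      ⟪Real.cos θ • sbv 0 + Real.sin θ • sbv 2, X⟫ = 0 →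
      Rex (Real.cos θ • sbv 0 + Real.sin θ • sbv 2) (sbv 1)
          (Real.cos θ • sbv 0 + Real.sin θ • sbv 2) X =
        (2 * Real.cos θ ^ 2 + 2) * ⟪sbv 1, X⟫) ∧
    (∀ X : EuclideanSpace ℝ (Fin 4),
      ⟪Real.cos θ • sbv 0 + Real.sin θ • sbv 2, X⟫ = 0 →
      Rex (Real.cos θ • sbv 0 + Real.sin θ • sbv 2) (sbv 3)
          (Real.cos θ • sbv 0 + Real.sin θ • sbv 2) X =
        (1 + Real.cos θ ^ 2) * ⟪sbv 3, X⟫) ∧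
    (∀ X : EuclideanSpace ℝ (Fin 4),
      ⟪Real.cos θ • sbv 0 + Real.sin θ • sbv 2, X⟫ = 0 →
      Rex (Real.cos θ • sbv 0 + Real.sin θ • sbv 2)
          (-Real.sin θ • sbv 0 + Real.cos θ • sbv 2)
          (Real.cos θ • sbv 0 + Real.sin θ • sbv 2) X =
        2 * ⟪-Real.sin θ • sbv 0 + Real.cos θ • sbv 2, X⟫) := by
  have hs := Real.sin_sq_add_cos_sq θ
  refine ⟨?_, ?_, ?_⟩
  · intro X hX
    simp only [sbv, inner_add_left, inner_smul_left, EuclideanSpace.inner_single_left,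
      RCLike.inner_apply, starRingEnd_apply, star_trivial, mul_one] at hX ⊢
    simp only [Rex, pluck, PiLp.add_apply, PiLp.smul_apply, EuclideanSpace.single_apply,
      smul_eq_mul]
    simp [Fin.reduceEq]
    ring_nf
    linear_combination (2 * X 1) * hs
  · intro X hX
    simp only [sbv, inner_add_left, inner_smul_left, EuclideanSpace.inner_single_left,
      RCLike.inner_apply, starRingEnd_apply, star_trivial, mul_one] at hX ⊢
    simp only [Rex, pluck, PiLp.add_apply, PiLp.smul_apply, EuclideanSpace.single_apply,
      smul_eq_mul]
    simp [Fin.reduceEq]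
    ring_nf
    linear_combination (X 3) * hs
  · intro X hX
    simp only [sbv, inner_add_left, inner_smul_left, EuclideanSpace.inner_single_left,
      RCLike.inner_apply, starRingEnd_apply, star_trivial, mul_one] at hX ⊢
    simp only [Rex, pluck, PiLp.add_apply, PiLp.smul_apply, EuclideanSpace.single_apply,
      smul_eq_mul]
    simp [Fin.reduceEq]
    ring_nf
    linear_combination (2 * Real.cos θ * X 2 - 2 * Real.sin θ * X 0) * hs
end

section
/- The algebraic curvature operator Rm = 4(e₁∧e₂)⊗(e₁∧e₂) + 2(e₁∧e₃)⊗(e₁∧e₃) + 2(e₁∧e₄)⊗(e₁∧e₄) + 2(e₂∧e₃)⊗(e₂∧e₃) + 2(e₂∧e₄)⊗(e₂∧e₄) + (e₃∧e₄)⊗(e₃∧e₄) on ℝ⁴ has 1/2-pinched flag curvature but its flag pinching is not better than 1/2: for the flag direction e = e₁, the eigenvalues of R_{e₁} on e₁^⊥ are 4, 2, 2, whose ratio of min to max is exactly 1/2. -/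
open scoped RealInnerProductSpace

set_option maxHeartbeats 1000000 in
lemma key (a b c d x y z w p q r s : ℝ)
    (h1 : a*x + b*y + c*z + d*w = 0) (h2 : a*p + b*q + c*r + d*s = 0)
    (h3 : x^2+y^2+z^2+w^2 = p^2+q^2+r^2+s^2) :
    (1/2 : ℝ) * (4*(a*q-b*p)^2 + 2*(a*r-c*p)^2 + 2*(a*s-d*p)^2 + 2*(b*r-c*q)^2
      + 2*(b*s-d*q)^2 + (c*s-d*r)^2)
    ≤ 4*(a*y-b*x)^2 + 2*(a*z-c*x)^2 + 2*(a*w-d*x)^2 + 2*(b*z-c*y)^2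
      + 2*(b*w-d*y)^2 + (c*w-d*z)^2 := by
  have key0 : 2*(4*(a*y-b*x)^2 + 2*(a*z-c*x)^2 + 2*(a*w-d*x)^2 + 2*(b*z-c*y)^2
        + 2*(b*w-d*y)^2 + (c*w-d*z)^2)
      - (4*(a*q-b*p)^2 + 2*(a*r-c*p)^2 + 2*(a*s-d*p)^2 + 2*(b*r-c*q)^2
        + 2*(b*s-d*q)^2 + (c*s-d*r)^2)
      = 4*(a*y-b*x)^2 + (c*s-d*r)^2 + 2*(c*z+d*w)^2 + 2*(a*p+b*q)^2
        + 2*(c*x+d*y)^2 + 2*(c*y-d*x)^2 + 2*(a*r+b*s)^2 + 2*(a*s-b*r)^2 := by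
    linear_combination (-4*(a*x + b*y + c*z + d*w))*h1
      + (2*(a*p + b*q + c*r + d*s))*h2 + (4*(a^2+b^2)+2*(c^2+d^2))*h3
  linarith [sq_nonneg (a*y-b*x), sq_nonneg (c*s-d*r), sq_nonneg (c*z+d*w),
    sq_nonneg (a*p+b*q), sq_nonneg (c*x+d*y), sq_nonneg (c*y-d*x),
    sq_nonneg (a*r+b*s), sq_nonneg (a*s-b*r), key0]

set_option maxHeartbeats 1000000 in
/-- The example operator has `1/2`-pinched flag curvature, and the pinching is
not better than `1/2`: for the flag direction `e = e₁` the flag form `R_{e₁}`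
on `e₁^⊥` has eigenvectors `e₂, e₃, e₄` with eigenvalues `4, 2, 2`, whose ratio
of min to max is exactly `1/2`. -/
theorem stmt_13 :
    (∀ e X Y : EuclideanSpace ℝ (Fin 4), e ≠ 0 → ⟪e, X⟫ = 0 → ⟪e, Y⟫ = 0 →
      ‖X‖ = ‖Y‖ → (1 / 2 : ℝ) * Rex e Y e Y ≤ Rex e X e X) ∧
    (∀ X : EuclideanSpace ℝ (Fin 4), ⟪sbv 0, X⟫ = 0 →
      Rex (sbv 0) (sbv 1) (sbv 0) X = 4 * ⟪sbv 1, X⟫ ∧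
      Rex (sbv 0) (sbv 2) (sbv 0) X = 2 * ⟪sbv 2, X⟫ ∧
      Rex (sbv 0) (sbv 3) (sbv 0) X = 2 * ⟪sbv 3, X⟫) ∧
    (2 : ℝ) / 4 = 1 / 2 := by
  refine ⟨?_, ?_, by norm_num⟩
  · intro e X Y _ hX hY hN
    have hX' : e 0 * X 0 + e 1 * X 1 + e 2 * X 2 + e 3 * X 3 = 0 := by
      simpa [PiLp.inner_apply, Fin.sum_univ_four, mul_comm] using hX
    have hY' : e 0 * Y 0 + e 1 * Y 1 + e 2 * Y 2 + e 3 * Y 3 = 0 := by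
      simpa [PiLp.inner_apply, Fin.sum_univ_four, mul_comm] using hY
    have hN2 : ⟪X, X⟫ = ⟪Y, Y⟫ := by
      rw [real_inner_self_eq_norm_sq, real_inner_self_eq_norm_sq, hN]
    have hN' : (X 0)^2 + (X 1)^2 + (X 2)^2 + (X 3)^2
        = (Y 0)^2 + (Y 1)^2 + (Y 2)^2 + (Y 3)^2 := by
      rw [PiLp.inner_apply, PiLp.inner_apply] at hN2
      simpa [PiLp.inner_apply, Fin.sum_univ_four, sq] using hN2
    have := key (e 0) (e 1) (e 2) (e 3) (X 0) (X 1) (X 2) (X 3)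
      (Y 0) (Y 1) (Y 2) (Y 3) hX' hY' hN'
    simp only [Rex, pluck]
    linarith [this]
  · intro X hX
    have hX0 : X 0 = 0 := by
      simpa [sbv, PiLp.inner_apply, EuclideanSpace.single_apply,
        Fin.sum_univ_four] using hX
    refine ⟨?_, ?_, ?_⟩ <;>
      simp [Rex, pluck, sbv, PiLp.inner_apply, EuclideanSpace.single_apply,
        Fin.sum_univ_four, hX0]
end

section
/- For any two-form Ω on ℝⁿ, the Weitzenböck curvature term satisfies Σ_{i,j} ωᵢ ∧ i(E_j) ℛ_{E_i E_j} Ω = (Ric ∧ id − Rm)(Ω), where (A ∧ B)(X∧Y) := (1/2)(A(X)∧B(Y) + B(X)∧A(Y)). -/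
open scoped BigOperators

/-- The Bochner–Weitzenböck curvature identity on two-forms (formula (5.1) of
Ni–Wilking), written in components with respect to an orthonormal basis
`{Eᵢ}` of `ℝⁿ` with dual basis `{ωᵢ}`.  A two-form `Ω` is represented by its
antisymmetric component matrix `Ω a b = Ω(E_a, E_b)`, the curvature action on
two-forms is `(ℛ_{E_i E_j}Ω)(Z,W) = −Ω(R(E_i,E_j)Z, W) − Ω(Z, R(E_i,E_j)W)`
with `(R(E_i,E_j)E_k)_l = R4 i j k l`, the wedge product of two one-forms
carries the factor `1/2` (matching the convention
`(A ∧ B)(X∧Y) = (1/2)(A(X)∧B(Y) + B(X)∧A(Y))` for operators), the Ricci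
endomorphism is `Ric a b = ∑ i, R4 a i b i`, and the curvature operator acts by
`(Rm Ω) a b = (1/2)·∑ i j, R4 i j a b · Ω i j`.  The identity states
`∑_{i,j} ωᵢ ∧ i(E_j) ℛ_{E_i E_j} Ω = (Ric ∧ id − Rm)(Ω)`, componentwise. -/
theorem stmt_15 (n : ℕ) (R4 : Fin n → Fin n → Fin n → Fin n → ℝ)
    (hanti : ∀ i j k l, R4 i j k l = - R4 j i k l)
    (hpair : ∀ i j k l, R4 i j k l = R4 k l i j)
    (hbianchi : ∀ i j k l, R4 i j k l + R4 j k i l + R4 k i j l = 0)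
    (Ω : Fin n → Fin n → ℝ) (hΩ : ∀ a b, Ω a b = - Ω b a) (a b : Fin n) :
    -- LHS: `(∑_{i,j} ωᵢ ∧ i(E_j) ℛ_{E_i E_j} Ω)(E_a, E_b)`
    (1 / 2 : ℝ) *
      ((∑ j, (-(∑ l, R4 a j j l * Ω l b) - ∑ l, R4 a j b l * Ω j l))
        - ∑ j, (-(∑ l, R4 b j j l * Ω l a) - ∑ l, R4 b j a l * Ω j l)) =
    -- RHS: `((Ric ∧ id)(Ω))(E_a, E_b) − (Rm(Ω))(E_a, E_b)`
    (1 / 2 : ℝ) * (∑ k, ((∑ i, R4 a i k i) * Ω k b + Ω a k * (∑ i, R4 k i b i)))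
      - (1 / 2 : ℝ) * ∑ i, ∑ j, R4 i j a b * Ω i j := by
  have hlast : ∀ i j k l, R4 i j l k = - R4 i j k l := by
    intro i j k l
    rw [hpair i j l k, hanti l k i j, hpair k l i j]
  have hR : (∑ k, ((∑ i, R4 a i k i) * Ω k b + Ω a k * (∑ i, R4 k i b i)))
      = ∑ j, ∑ l, (R4 a j l j * Ω l b + Ω a l * R4 l j b j) := by
    have h : ∀ k, ((∑ i, R4 a i k i) * Ω k b + Ω a k * (∑ i, R4 k i b i))
        = ∑ i, (R4 a i k i * Ω k b + Ω a k * R4 k i b i) := by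
      intro k
      rw [Finset.sum_add_distrib, Finset.sum_mul, Finset.mul_sum]
    simp_rw [h]
    exact Finset.sum_comm
  rw [hR, ← mul_sub]
  congr 1
  rw [← Finset.sum_sub_distrib, ← Finset.sum_sub_distrib]
  apply Finset.sum_congr rfl
  intro j _
  rw [← Finset.sum_sub_distrib,
    show (-(∑ l, R4 a j j l * Ω l b) - ∑ l, R4 a j b l * Ω j l)
        - (-(∑ l, R4 b j j l * Ω l a) - ∑ l, R4 b j a l * Ω j l)
      = ((∑ l, R4 b j j l * Ω l a) + ∑ l, R4 b j a l * Ω j l)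
        - ((∑ l, R4 a j j l * Ω l b) + ∑ l, R4 a j b l * Ω j l) by ring,
    ← Finset.sum_add_distrib, ← Finset.sum_add_distrib, ← Finset.sum_sub_distrib]
  apply Finset.sum_congr rfl
  intro l _
  linear_combination (-(Ω l b)) * hlast a j j l + (-(R4 l j b j)) * hΩ a l
    + (Ω l a) * hpair l j b j + (Ω l a) * hlast b j j l
    + (-(Ω j l)) * hbianchi b a j l + (Ω j l) * hanti b a j l
    + (Ω j l) * hanti j b a l + (-(Ω j l)) * hpair a b j l
end
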